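/- Let Ψ be a doubling Young function, Q a square in ℝ², P a polynomial of degree at most k on ℝ², and E, F ⊂ Q measurable sets with |E|, |F| > η|Q| for some η > 0. Then ∫_E Ψ(|P(x)|) dx ≤ C ∫_F Ψ(|P(x)|) dx, where C depends only on η, k, and the doubling constant of Ψ. -/

import Mathlib

/-!
A polynomial of degree `≤ k` bounded by `m` on a subset of proportion `β` of an interval is
bounded by `(k + 1) (2 (k + 1) / β)^k m` on the whole interval: Lagrange-interpolate it at
`k + 1` well-separated nodes of the subset. Applying this along vertical and then horizontal
slices (Fubini) gives the same Remez inequality on a square, with the constant squared.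

Let `S = |P x₀|` be the maximum of `|P|` on `Q` and `M` the square Remez constant for
proportion `η / 2`. If `|P| < S / (2M)` on half of `F`, Remez forces `S ≤ S / 2`, i.e. `P = 0`
on `Q`; in either case `|P| ≥ S / (2M)` on some `G ⊆ F` with `|G| ≥ η |Q| / 2`. With
`2ⁿ ≥ 2M` and `D = max C₀ 0`, doubling gives
`∫_E Ψ(|P|) ≤ |Q| Ψ(S) ≤ |Q| Dⁿ Ψ(S / (2M)) ≤ (2 / η) Dⁿ ∫_F Ψ(|P|)`.
-/

open MeasureTheory

/-- `Q` is the (closed, axis-parallel) square in `ℝ²` with lower-left corner `c` and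
side length `s > 0`. -/
def IsSquare2 (Q : Set (EuclideanSpace ℝ (Fin 2))) (c : EuclideanSpace ℝ (Fin 2))
    (s : ℝ) : Prop :=
  0 < s ∧ Q = {x | ∀ i : Fin 2, x i ∈ Set.Icc (c i) (c i + s)}

/-- `P : ℝ² → ℝ` is (given by) a polynomial of total degree at most `k`. -/
def IsPolyDeg (P : EuclideanSpace ℝ (Fin 2) → ℝ) (k : ℕ) : Prop :=
  ∃ p : MvPolynomial (Fin 2) ℝ, p.totalDegree ≤ k ∧
    ∀ x, P x = MvPolynomial.eval (fun i => x i) p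

open Set Polynomial

local notation "ℝ²" => EuclideanSpace ℝ (Fin 2)

theorem exists_separated_finset_subset {δ : ℝ} (hδ : 0 < δ) (n : ℕ) {A : Set ℝ}
    (hA : ENNReal.ofReal (n * (2 * δ)) < volume A) :
    ∃ T : Finset ℝ,
      T.card = n + 1 ∧ ↑T ⊆ A ∧ (T : Set ℝ).Pairwise fun x y => δ ≤ |x - y| := by
  induction n generalizing A with
  | zero =>
    obtain ⟨t, ht⟩ := nonempty_of_measure_ne_zero (pos_of_gt hA).ne'
    exact ⟨{t}, rfl, by simpa using ht, by simp⟩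
  | succ n ih =>
    obtain ⟨t, ht⟩ := nonempty_of_measure_ne_zero (pos_of_gt hA).ne'
    set I := Icc (t - δ) (t + δ)
    have hrest : ENNReal.ofReal (n * (2 * δ)) < volume (A \ I) := by
      have hA' : volume A ≤ volume (A \ I) + ENNReal.ofReal (2 * δ) := by
        refine (measure_mono (subset_sdiff_union A I)).trans
          ((measure_union_le _ _).trans_eq ?_)
        rw [Real.volume_Icc]; ring_nf
      rw [← ENNReal.add_lt_add_iff_right (a := ENNReal.ofReal (2 * δ)) ENNReal.ofReal_ne_top,
        ← ENNReal.ofReal_add (by positivity) (by positivity)]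
      refine lt_of_eq_of_lt ?_ (hA.trans_le hA')
      push_cast; ring_nf
    obtain ⟨T, hcard, hTA, hsep⟩ := ih hrest
    have hfar : ∀ u ∈ (T : Set ℝ), δ ≤ |t - u| := fun u hu => by
      have := (hTA hu).2
      simp only [I, mem_Icc, not_and_or, not_le] at this
      rcases this with h | h
      · rw [abs_of_pos (by linarith)]; linarith
      · rw [abs_of_neg (by linarith)]; linarith
    have htT : t ∉ T := fun h => by simpa using (hfar t h).trans_lt' hδ
    refine ⟨insert t T, by rw [Finset.card_insert_of_notMem htT, hcard], ?_, ?_⟩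
    · rw [Finset.coe_insert, insert_subset_iff]
      exact ⟨ht, hTA.trans sdiff_subset⟩
    · rw [Finset.coe_insert]
      refine hsep.insert fun u hu _ => ⟨hfar u hu, ?_⟩
      rw [abs_sub_comm]; exact hfar u hu

theorem abs_eval_lagrangeBasis_le {T : Finset ℝ} {δ s x : ℝ} (hδ : 0 < δ)
    (hsep : (T : Set ℝ).Pairwise fun x y => δ ≤ |x - y|) (hx : ∀ t ∈ T, |x - t| ≤ s)
    {i : ℝ} (hi : i ∈ T) :
    |(Lagrange.basis T id i).eval x| ≤ (s / δ) ^ (T.card - 1) := by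
  rw [Lagrange.basis, eval_prod, Finset.abs_prod, ← Finset.card_erase_of_mem hi,
    ← Finset.prod_const]
  refine Finset.prod_le_prod (fun _ _ => abs_nonneg _) fun j hj => ?_
  obtain ⟨hji, hj⟩ := Finset.mem_erase.mp hj
  simp only [Lagrange.basisDivisor, eval_mul, eval_C, eval_sub, eval_X, id, abs_mul, abs_inv]
  rw [inv_mul_eq_div]
  exact div_le_div₀ ((abs_nonneg _).trans (hx j hj)) (hx j hj) hδ (hsep hi hj (Ne.symm hji))

theorem abs_eval_le_of_separated {q : ℝ[X]} {T : Finset ℝ} {δ s m x : ℝ} (hδ : 0 < δ)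
    (hdeg : q.natDegree < T.card) (hsep : (T : Set ℝ).Pairwise fun x y => δ ≤ |x - y|)
    (hx : ∀ t ∈ T, |x - t| ≤ s) (hm : ∀ t ∈ T, |q.eval t| ≤ m) :
    |q.eval x| ≤ T.card * (s / δ) ^ (T.card - 1) * m := by
  obtain ⟨t₀, ht₀⟩ := Finset.card_pos.mp (pos_of_gt hdeg)
  have hm0 : 0 ≤ m := (abs_nonneg _).trans (hm t₀ ht₀)
  have hq : q = Lagrange.interpolate T id fun i => q.eval i :=
    Lagrange.eq_interpolate (injOn_id _) (degree_le_natDegree.trans_lt (by exact_mod_cast hdeg))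
  rw [hq, Lagrange.interpolate_apply, eval_finsetSum]
  calc |∑ i ∈ T, (C (q.eval i) * Lagrange.basis T id i).eval x|
      ≤ ∑ i ∈ T, |(C (q.eval i) * Lagrange.basis T id i).eval x| :=
        Finset.abs_sum_le_sum_abs _ _
    _ ≤ ∑ _i ∈ T, m * (s / δ) ^ (T.card - 1) := Finset.sum_le_sum fun i hi => by
        rw [eval_mul, eval_C, abs_mul]
        exact mul_le_mul (hm i hi) (abs_eval_lagrangeBasis_le hδ hsep hx hi) (abs_nonneg _) hm0
    _ = T.card * (s / δ) ^ (T.card - 1) * m := by rw [Finset.sum_const, nsmul_eq_mul]; ring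

-- A subset of measure `β |I|` contains `k + 1` nodes `β |I| / (2 (k + 1))` apart, on which
-- every Lagrange basis polynomial is bounded by `(2 (k + 1) / β)^k` over `I`.
noncomputable def remezConst (k : ℕ) (β : ℝ) : ℝ := (k + 1) * (2 * (k + 1) / β) ^ k

theorem remezConst_pos (k : ℕ) {β : ℝ} (hβ : 0 < β) : 0 < remezConst k β := by
  unfold remezConst; positivity

theorem abs_eval_le_remezConst_mul {k : ℕ} {β a b m : ℝ} (hβ : 0 < β) (hab : a < b)
    {q : ℝ[X]} (hq : q.natDegree ≤ k) {A : Set ℝ} (hA : A ⊆ Icc a b)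
    (hvol : ENNReal.ofReal β * volume (Icc a b) ≤ volume A) (hm : ∀ t ∈ A, |q.eval t| ≤ m)
    {x : ℝ} (hx : x ∈ Icc a b) : |q.eval x| ≤ remezConst k β * m := by
  set δ := β * (b - a) / (2 * (k + 1))
  have hδ : 0 < δ := div_pos (mul_pos hβ (sub_pos.mpr hab)) (by positivity)
  have hvol' : ENNReal.ofReal (k * (2 * δ)) < volume A := by
    rw [Real.volume_Icc, ← ENNReal.ofReal_mul hβ.le] at hvol
    refine lt_of_lt_of_le ?_ hvol
    refine (ENNReal.ofReal_lt_ofReal_iff (mul_pos hβ (sub_pos.mpr hab))).mpr ?_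
    have : (k : ℝ) * (2 * δ) = β * (b - a) * (k / (k + 1)) := by
      simp only [δ]; field_simp
    rw [this, mul_lt_iff_lt_one_right (mul_pos hβ (sub_pos.mpr hab)),
      div_lt_one (by positivity)]
    linarith
  obtain ⟨T, hcard, hTA, hsep⟩ := exists_separated_finset_subset hδ k hvol'
  have hxT : ∀ t ∈ T, |x - t| ≤ b - a := fun t ht => by
    have := hA (hTA ht)
    rw [abs_sub_le_iff]; constructor <;> linarith [hx.1, hx.2, this.1, this.2]
  have key := abs_eval_le_of_separated hδ (hcard ▸ Nat.lt_succ_of_le hq) hsep hxT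
    fun t ht => hm t (hTA ht)
  have hratio : (b - a) / δ = 2 * (k + 1) / β := by
    simp only [δ]; field_simp [(sub_pos.mpr hab).ne']
  rwa [hcard, Nat.add_sub_cancel, hratio, Nat.cast_add_one] at key

section Slices

variable {X Y : Type*} [MeasurableSpace X] [MeasurableSpace Y] {μ : Measure X} {ν : Measure Y}
  [SFinite ν] {A : Set (X × Y)} {I : Set X} {J : Set Y}

theorem MeasureTheory.Measure.prod_apply_le_of_subset_prod (hA : MeasurableSet A)
    (hI : MeasurableSet I) (hAIJ : A ⊆ I ×ˢ J) (c : ENNReal) :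
    μ.prod ν A ≤ ν J * μ {x ∈ I | c ≤ ν (Prod.mk x ⁻¹' A)} + c * μ I := by
  set G := {x ∈ I | c ≤ ν (Prod.mk x ⁻¹' A)}
  have hG : MeasurableSet G := hI.inter (measurable_measure_prodMk_left hA measurableSet_Ici)
  have hslice : ∀ x,
      ν (Prod.mk x ⁻¹' A) ≤ G.indicator (fun _ => ν J) x + I.indicator (fun _ => c) x := by
    intro x
    by_cases hxI : x ∈ I
    · by_cases hxc : c ≤ ν (Prod.mk x ⁻¹' A)
      · rw [indicator_of_mem (show x ∈ G from ⟨hxI, hxc⟩)]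
        exact le_add_right (measure_mono fun y hy => (hAIJ hy).2)
      · rw [indicator_of_mem hxI]
        exact le_add_left (not_le.mp hxc).le
    · have : Prod.mk x ⁻¹' A = ∅ := eq_empty_of_forall_notMem fun y hy => hxI (hAIJ hy).1
      simp [this]
  calc μ.prod ν A = ∫⁻ x, ν (Prod.mk x ⁻¹' A) ∂μ := Measure.prod_apply hA
    _ ≤ ∫⁻ x, G.indicator (fun _ => ν J) x + I.indicator (fun _ => c) x ∂μ :=
        lintegral_mono hslice
    _ = ν J * μ G + c * μ I := by
      rw [lintegral_add_left (measurable_const.indicator hG), lintegral_indicator_const hG,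
        lintegral_indicator_const hI]

theorem MeasureTheory.Measure.mul_le_measure_setOf_le_measure_slice (hA : MeasurableSet A)
    (hI : MeasurableSet I) (hAIJ : A ⊆ I ×ˢ J) (hμI : μ I ≠ ⊤) (hνJ : ν J ≠ ⊤)
    (hνJ₀ : ν J ≠ 0) {r : ℝ} (hr : 0 ≤ r)
    (hvol : ENNReal.ofReal r * (μ I * ν J) ≤ μ.prod ν A) :
    ENNReal.ofReal (r / 2) * μ I ≤
      μ {x ∈ I | ENNReal.ofReal (r / 2) * ν J ≤ ν (Prod.mk x ⁻¹' A)} := by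
  set u := ENNReal.ofReal (r / 2)
  have hsum : ENNReal.ofReal r * (μ I * ν J) = u * μ I * ν J + u * μ I * ν J := by
    rw [← add_halves r, ENNReal.ofReal_add (by positivity) (by positivity)]
    ring
  have hfin : u * μ I * ν J ≠ ⊤ :=
    ENNReal.mul_ne_top (ENNReal.mul_ne_top ENNReal.ofReal_ne_top hμI) hνJ
  have h := hvol.trans (μ.prod_apply_le_of_subset_prod hA hI hAIJ (u * ν J))
  rw [hsum, mul_comm (ν J), mul_right_comm u (ν J)] at h
  rw [← ENNReal.mul_le_mul_iff_left hνJ₀ hνJ]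
  exact ENNReal.le_of_add_le_add_right hfin h

end Slices

theorem abs_le_remezConst_sq_mul_of_subset_Icc_prod {k : ℕ} {β a₁ b₁ a₂ b₂ m : ℝ}
    (hβ : 0 < β) (h₁ : a₁ < b₁) (h₂ : a₂ < b₂) {f : ℝ × ℝ → ℝ}
    (hfv : ∀ x, ∃ q : ℝ[X], q.natDegree ≤ k ∧ ∀ y, f (x, y) = q.eval y)
    (hfh : ∀ y, ∃ q : ℝ[X], q.natDegree ≤ k ∧ ∀ x, f (x, y) = q.eval x)
    {A : Set (ℝ × ℝ)} (hA : MeasurableSet A) (hAR : A ⊆ Icc a₁ b₁ ×ˢ Icc a₂ b₂)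
    (hvol : ENNReal.ofReal β * volume (Icc a₁ b₁ ×ˢ Icc a₂ b₂) ≤ volume A)
    (hm : ∀ z ∈ A, |f z| ≤ m) {z : ℝ × ℝ} (hz : z ∈ Icc a₁ b₁ ×ˢ Icc a₂ b₂) :
    |f z| ≤ remezConst k (β / 2) ^ 2 * m := by
  have hβ2 : 0 < β / 2 := half_pos hβ
  set G := {x ∈ Icc a₁ b₁ |
    ENNReal.ofReal (β / 2) * volume (Icc a₂ b₂) ≤ volume (Prod.mk x ⁻¹' A)}
  have hG : ENNReal.ofReal (β / 2) * volume (Icc a₁ b₁) ≤ volume G := by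
    rw [Measure.volume_eq_prod, Measure.prod_prod] at hvol
    refine volume.mul_le_measure_setOf_le_measure_slice hA measurableSet_Icc hAR
      measure_Icc_lt_top.ne measure_Icc_lt_top.ne ?_ hβ.le hvol
    simpa [Real.volume_Icc] using h₂
  have hvert : ∀ x ∈ G, |f (x, z.2)| ≤ remezConst k (β / 2) * m := by
    intro x hx
    obtain ⟨q, hq, hfq⟩ := hfv x
    rw [hfq]
    exact abs_eval_le_remezConst_mul hβ2 h₂ hq (fun y hy => (hAR hy).2) hx.2
      (fun y hy => hfq y ▸ hm _ hy) hz.2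
  obtain ⟨q, hq, hfq⟩ := hfh z.2
  calc |f z| = |q.eval z.1| := by rw [← hfq]
    _ ≤ remezConst k (β / 2) * (remezConst k (β / 2) * m) :=
      abs_eval_le_remezConst_mul hβ2 h₁ hq (fun x hx => hx.1) hG
        (fun x hx => hfq x ▸ hvert x hx) hz.1
    _ = remezConst k (β / 2) ^ 2 * m := by ring

theorem MvPolynomial.exists_natDegree_le_eval_update {σ R : Type*} [CommRing R] [DecidableEq σ]
    (p : MvPolynomial σ R) (x : σ → R) (i : σ) :
    ∃ q : R[X], q.natDegree ≤ p.totalDegree ∧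
      ∀ t, MvPolynomial.eval (Function.update x i t) p = q.eval t := by
  set g : σ → R[X] := Function.update (fun j => Polynomial.C (x j)) i Polynomial.X
  have hg : ∀ j, (g j).natDegree ≤ 1 := fun j => by
    by_cases hj : j = i
    · subst hj; simp [g, natDegree_X_le]
    · simp [g, hj]
  refine ⟨MvPolynomial.aeval g p, ?_, fun t => ?_⟩
  · rw [MvPolynomial.aeval_def, MvPolynomial.eval₂_eq]
    refine natDegree_sum_le_of_forall_le _ _ fun d hd => ?_
    calc (algebraMap R R[X] (p.coeff d) * ∏ j ∈ d.support, g j ^ d j).natDegree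
        ≤ ∑ j ∈ d.support, (g j ^ d j).natDegree :=
          (natDegree_C_mul_le _ _).trans (natDegree_prod_le _ _)
      _ ≤ ∑ j ∈ d.support, d j := Finset.sum_le_sum fun j _ =>
          natDegree_pow_le.trans (by simpa using Nat.mul_le_mul_left (d j) (hg j))
      _ ≤ p.totalDegree := MvPolynomial.le_totalDegree hd
  · have : Function.update x i t = fun j => (g j).eval t := by
      funext j
      by_cases hj : j = i
      · subst hj; simp [g]
      · simp [g, hj]
    rw [this]
    induction p using MvPolynomial.induction_on with
    | C a => simp
    | add p q hp hq => simp [hp, hq]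
    | mul_X p n hp => simp [hp]

noncomputable def EuclideanSpace.finTwoEquivProd : ℝ² ≃L[ℝ] ℝ × ℝ :=
  (EuclideanSpace.equiv (Fin 2) ℝ).trans (ContinuousLinearEquiv.finTwoArrow ℝ ℝ)

theorem EuclideanSpace.finTwoEquivProd_apply (x : ℝ²) : finTwoEquivProd x = (x 0, x 1) := rfl

theorem EuclideanSpace.volume_preserving_finTwoEquivProd : MeasurePreserving finTwoEquivProd :=
  (volume_preserving_finTwoArrow ℝ).comp (PiLp.volume_preserving_ofLp (Fin 2))

section Square

open EuclideanSpace

variable {Q : Set ℝ²} {c : ℝ²} {s : ℝ}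

theorem IsSquare2.eq_preimage (hQ : IsSquare2 Q c s) :
    Q = finTwoEquivProd ⁻¹' (Icc (c 0) (c 0 + s) ×ˢ Icc (c 1) (c 1 + s)) := by
  ext x
  simp only [hQ.2, mem_ofPred_eq, Fin.forall_fin_two, mem_preimage, finTwoEquivProd_apply,
    mem_prod]

theorem IsSquare2.measurableSet (hQ : IsSquare2 Q c s) : MeasurableSet Q :=
  hQ.eq_preimage ▸
    (measurableSet_Icc.prod measurableSet_Icc).preimage finTwoEquivProd.continuous.measurable

theorem IsSquare2.volume_eq (hQ : IsSquare2 Q c s) :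
    volume Q = volume (Icc (c 0) (c 0 + s) ×ˢ Icc (c 1) (c 1 + s)) := by
  rw [hQ.eq_preimage, volume_preserving_finTwoEquivProd.measure_preimage
    (measurableSet_Icc.prod measurableSet_Icc).nullMeasurableSet]

theorem IsSquare2.volume_lt_top (hQ : IsSquare2 Q c s) : volume Q < ⊤ := by
  rw [hQ.volume_eq, Measure.volume_eq_prod, Measure.prod_prod]
  exact ENNReal.mul_lt_top measure_Icc_lt_top measure_Icc_lt_top

theorem IsSquare2.isCompact (hQ : IsSquare2 Q c s) : IsCompact Q :=
  hQ.eq_preimage ▸ finTwoEquivProd.toHomeomorph.isCompact_preimage.mpr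
    (isCompact_Icc.prod isCompact_Icc)

theorem IsSquare2.corner_mem (hQ : IsSquare2 Q c s) : c ∈ Q := by
  rw [hQ.2]
  exact fun i => ⟨le_rfl, le_add_of_nonneg_right hQ.1.le⟩

theorem IsPolyDeg.continuous {P : ℝ² → ℝ} {k : ℕ} (hP : IsPolyDeg P k) : Continuous P := by
  obtain ⟨p, -, hp⟩ := hP
  rw [funext hp]
  exact (MvPolynomial.continuous_eval p).comp (PiLp.continuous_ofLp 2 _)

theorem IsSquare2.abs_le_remezConst_sq_mul (hQ : IsSquare2 Q c s) {P : ℝ² → ℝ} {k : ℕ}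
    (hP : IsPolyDeg P k) {β m : ℝ} (hβ : 0 < β) {A : Set ℝ²} (hA : MeasurableSet A)
    (hAQ : A ⊆ Q) (hvol : ENNReal.ofReal β * volume Q ≤ volume A)
    (hm : ∀ x ∈ A, |P x| ≤ m) {x : ℝ²} (hx : x ∈ Q) :
    |P x| ≤ remezConst k (β / 2) ^ 2 * m := by
  set e := finTwoEquivProd
  obtain ⟨p, hpk, hp⟩ := hP
  have hPe : ∀ z, P (e.symm z) = MvPolynomial.eval ![z.1, z.2] p := fun z => hp _
  have hfv : ∀ u, ∃ q : ℝ[X], q.natDegree ≤ k ∧ ∀ v, P (e.symm (u, v)) = q.eval v := by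
    intro u
    obtain ⟨q, hq, hpq⟩ := p.exists_natDegree_le_eval_update ![u, 0] 1
    refine ⟨q, hq.trans hpk, fun v => ?_⟩
    rw [hPe, ← hpq]
    congr 2; funext i; fin_cases i <;> rfl
  have hfh : ∀ v, ∃ q : ℝ[X], q.natDegree ≤ k ∧ ∀ u, P (e.symm (u, v)) = q.eval u := by
    intro v
    obtain ⟨q, hq, hpq⟩ := p.exists_natDegree_le_eval_update ![0, v] 0
    refine ⟨q, hq.trans hpk, fun u => ?_⟩
    rw [hPe, ← hpq]
    congr 2; funext i; fin_cases i <;> rfl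
  have hA' : MeasurableSet (e.symm ⁻¹' A) := hA.preimage e.symm.continuous.measurable
  have hvol' : volume (e.symm ⁻¹' A) = volume A := by
    conv_rhs => rw [← e.toEquiv.preimage_symm_preimage A]
    exact (volume_preserving_finTwoEquivProd.measure_preimage hA'.nullMeasurableSet).symm
  have hmem : ∀ y, y ∈ Q ↔ e y ∈ Icc (c 0) (c 0 + s) ×ˢ Icc (c 1) (c 1 + s) := fun y => by
    rw [hQ.eq_preimage]; rfl
  have key := abs_le_remezConst_sq_mul_of_subset_Icc_prod (k := k) hβ
    (lt_add_of_pos_right _ hQ.1) (lt_add_of_pos_right _ hQ.1) hfv hfh hA'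
    (fun z hz => e.apply_symm_apply z ▸ (hmem _).1 (hAQ hz))
    (by rwa [hvol', ← hQ.volume_eq]) (fun z hz => hm _ hz) ((hmem x).1 hx)
  rwa [e.symm_apply_apply] at key

theorem IsSquare2.ofReal_half_mul_volume_le_volume_superlevel (hQ : IsSquare2 Q c s)
    {P : ℝ² → ℝ} {k : ℕ} (hP : IsPolyDeg P k) {η : ℝ} (hη : 0 < η) {F : Set ℝ²}
    (hF : MeasurableSet F) (hFQ : F ⊆ Q) (hFvol : ENNReal.ofReal η * volume Q < volume F)
    {x₀ : ℝ²} (hx₀ : x₀ ∈ Q) :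
    ENNReal.ofReal (η / 2) * volume Q ≤
      volume {x ∈ F | |P x₀| / (2 * remezConst k (η / 2 / 2) ^ 2) ≤ |P x|} := by
  set M := remezConst k (η / 2 / 2) ^ 2
  have hM : 0 < M := pow_pos (remezConst_pos k (by positivity)) 2
  set t := |P x₀| / (2 * M)
  have hPm : Measurable fun x => |P x| := (continuous_abs.comp hP.continuous).measurable
  have hhalf : ENNReal.ofReal η * volume Q =
      ENNReal.ofReal (η / 2) * volume Q + ENNReal.ofReal (η / 2) * volume Q := by
    rw [← add_mul, ← ENNReal.ofReal_add (by positivity) (by positivity), add_halves]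
  by_cases hlow : ENNReal.ofReal (η / 2) * volume Q ≤ volume {x ∈ F | |P x| < t}
  · have hS : |P x₀| ≤ M * t :=
      hQ.abs_le_remezConst_sq_mul hP (half_pos hη)
        (hF.inter (measurableSet_lt hPm measurable_const)) (fun x hx => hFQ hx.1) hlow
        (fun x hx => hx.2.le) hx₀
    have ht : t = 0 := by
      have : M * t = |P x₀| / 2 := by simp only [t]; field_simp
      have h0 : |P x₀| = 0 := by linarith [abs_nonneg (P x₀)]
      simp only [t, h0, zero_div]
    calc ENNReal.ofReal (η / 2) * volume Q ≤ ENNReal.ofReal η * volume Q := by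
          rw [hhalf]; exact le_add_self
      _ ≤ volume F := hFvol.le
      _ ≤ volume {x ∈ F | t ≤ |P x|} := measure_mono fun x hx => ⟨hx, ht ▸ abs_nonneg _⟩
  · by_contra hhigh
    have hsplit : volume F ≤ volume {x ∈ F | |P x| < t} + volume {x ∈ F | t ≤ |P x|} :=
      (measure_mono fun x hx => (lt_or_ge (|P x|) t).imp (⟨hx, ·⟩) (⟨hx, ·⟩)).trans
        (measure_union_le _ _)
    exact (hFvol.trans_le hsplit).not_ge
      (hhalf ▸ add_le_add (not_le.mp hlow).le (not_le.mp hhigh).le)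

end Square

theorem MonotoneOn.integrableOn_comp_of_nonneg {α : Type*} [MeasurableSpace α] {μ : Measure α}
    {Ψ : ℝ → ℝ} (hΨ : MonotoneOn Ψ (Ici 0)) {f : α → ℝ} (hf : Measurable f)
    (hf0 : ∀ x, 0 ≤ f x) {Q : Set α} (hQ : MeasurableSet Q) (hμQ : μ Q ≠ ⊤) {C : ℝ}
    (hC : ∀ x ∈ Q, ‖Ψ (f x)‖ ≤ C) :
    IntegrableOn (fun x => Ψ (f x)) Q μ := by
  have hmono : Monotone fun t => Ψ (max t 0) := fun a b hab =>
    hΨ (le_max_right a 0) (le_max_right b 0) (max_le_max hab le_rfl)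
  have hmeas : Measurable fun x => Ψ (f x) := by
    convert hmono.measurable.comp hf using 2 with x
    simp [max_eq_left (hf0 x)]
  exact Measure.integrableOn_of_bounded hμQ hmeas.aestronglyMeasurable
    ((ae_restrict_iff' hQ).mpr (.of_forall hC))

theorem le_pow_mul_of_doubling {Ψ : ℝ → ℝ} {C : ℝ} (hΨ : MonotoneOn Ψ (Ici 0))
    (hΨ0 : ∀ t, 0 ≤ t → 0 ≤ Ψ t) (hdoub : ∀ t, 0 ≤ t → Ψ (2 * t) ≤ C * Ψ t)
    (n : ℕ) {t u : ℝ} (ht : 0 ≤ t) (hu : 0 ≤ u) (htu : t ≤ 2 ^ n * u) :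
    Ψ t ≤ max C 0 ^ n * Ψ u := by
  induction n generalizing u with
  | zero => simpa using hΨ ht hu (by simpa using htu)
  | succ n ih =>
    calc Ψ t ≤ max C 0 ^ n * Ψ (2 * u) :=
          ih (by positivity) (by rwa [pow_succ, mul_assoc] at htu)
      _ ≤ max C 0 ^ n * (max C 0 * Ψ u) := by
          gcongr
          exact (hdoub u hu).trans (mul_le_mul_of_nonneg_right (le_max_left _ _) (hΨ0 u hu))
      _ = max C 0 ^ (n + 1) * Ψ u := by ring

theorem setIntegral_le_mul_measureReal {α : Type*} [MeasurableSpace α] {μ : Measure α}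
    {f : α → ℝ} {E Q : Set α} {C : ℝ} (hEQ : E ⊆ Q) (hQ : μ Q ≠ ⊤) (hC : 0 ≤ C)
    (hf : ∀ x ∈ Q, ‖f x‖ ≤ C) :
    ∫ x in E, f x ∂μ ≤ C * μ.real Q :=
  (le_abs_self _).trans <|
    (norm_setIntegral_le_of_norm_le_const ((measure_mono hEQ).trans_lt hQ.lt_top)
      fun x hx => hf x (hEQ hx)).trans <|
    mul_le_mul_of_nonneg_left (measureReal_mono hEQ hQ) hC

theorem mul_measureReal_le_setIntegral {α : Type*} [MeasurableSpace α] {μ : Measure α}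
    {f : α → ℝ} {F G : Set α} {c : ℝ} (hf : IntegrableOn f F μ) (hf0 : 0 ≤ f)
    (hG : MeasurableSet G) (hGF : G ⊆ F) (hμG : μ G ≠ ⊤) (hc : ∀ x ∈ G, c ≤ f x) :
    c * μ.real G ≤ ∫ x in F, f x ∂μ :=
  (setIntegral_ge_of_const_le_real hG hμG hc (hf.mono_set hGF)).trans
    (setIntegral_mono_set hf (.of_forall hf0) (.of_forall hGF))

/-- Lemma `norm_equivalence`: for a doubling Young function `Ψ`, a square
`Q`, a polynomial `P` of degree at most `k`, and measurable `E, F ⊆ Q` with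
`|E|, |F| > η|Q|`, one has `∫_E Ψ(|P|) ≤ C ∫_F Ψ(|P|)` with `C = C(η, k, C₀)`. -/
theorem poly_modular_comparison (k : ℕ) (η : ℝ) (hη : 0 < η) (C0 : ℝ) :
    ∃ C : ℝ, ∀ Ψ : ℝ → ℝ,
      ConvexOn ℝ (Set.Ici 0) Ψ →
      MonotoneOn Ψ (Set.Ici 0) →
      Ψ 0 = 0 →
      (∀ t : ℝ, 0 ≤ t → 0 ≤ Ψ t) →
      (∀ t : ℝ, 0 ≤ t → Ψ (2 * t) ≤ C0 * Ψ t) →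
      ∀ (Q : Set (EuclideanSpace ℝ (Fin 2))) (c : EuclideanSpace ℝ (Fin 2)) (s : ℝ),
        IsSquare2 Q c s →
        ∀ P : EuclideanSpace ℝ (Fin 2) → ℝ, IsPolyDeg P k →
        ∀ E F : Set (EuclideanSpace ℝ (Fin 2)),
          E ⊆ Q → F ⊆ Q → MeasurableSet E → MeasurableSet F →
          ENNReal.ofReal η * volume Q < volume E →
          ENNReal.ofReal η * volume Q < volume F →
          ∫ x in E, Ψ (|P x|) ≤ C * ∫ x in F, Ψ (|P x|) := by
  set M := remezConst k (η / 2 / 2) ^ 2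
  have hM : 0 < M := pow_pos (remezConst_pos k (by positivity)) 2
  obtain ⟨n, hn⟩ := pow_unbounded_of_one_lt (2 * M) one_lt_two
  refine ⟨2 / η * max C0 0 ^ n,
    fun Ψ _ hmono _ hΨ0 hdoub Q c s hQ P hP E F hEQ hFQ _ hF _ hFvol => ?_⟩
  have hPc : Continuous fun x => |P x| := continuous_abs.comp hP.continuous
  obtain ⟨x₀, hx₀, hmax⟩ :=
    hQ.isCompact.exists_isMaxOn ⟨c, hQ.corner_mem⟩ hPc.continuousOn
  set t := |P x₀| / (2 * M)
  set G := {x ∈ F | t ≤ |P x|}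
  have ht : 0 ≤ t := by positivity
  have hGfin : volume G ≠ ⊤ :=
    ((measure_mono fun x hx => hFQ hx.1).trans_lt hQ.volume_lt_top).ne
  have hG : η / 2 * volume.real Q ≤ volume.real G := by
    have := ENNReal.toReal_mono hGfin
      (hQ.ofReal_half_mul_volume_le_volume_superlevel hP hη hF hFQ hFvol hx₀)
    rwa [ENNReal.toReal_mul, ENNReal.toReal_ofReal (by positivity)] at this
  have hΨmax : ∀ x ∈ Q, ‖Ψ |P x|‖ ≤ Ψ |P x₀| := fun x hx => by
    rw [Real.norm_of_nonneg (hΨ0 _ (abs_nonneg _))]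
    exact hmono (abs_nonneg (P x)) (abs_nonneg (P x₀)) (hmax hx)
  have hdoubling : Ψ |P x₀| ≤ max C0 0 ^ n * Ψ t :=
    le_pow_mul_of_doubling hmono hΨ0 hdoub n (abs_nonneg _) ht <|
      calc |P x₀| = 2 * M * t := by simp only [t]; field_simp
        _ ≤ 2 ^ n * t := mul_le_mul_of_nonneg_right hn.le ht
  have hint : IntegrableOn (fun x => Ψ |P x|) Q :=
    hmono.integrableOn_comp_of_nonneg hPc.measurable (fun _ => abs_nonneg _) hQ.measurableSet
      hQ.volume_lt_top.ne hΨmax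
  have hGm : MeasurableSet G := hF.inter (measurableSet_le measurable_const hPc.measurable)
  calc ∫ x in E, Ψ |P x|
      ≤ Ψ |P x₀| * volume.real Q :=
        setIntegral_le_mul_measureReal hEQ hQ.volume_lt_top.ne (hΨ0 _ (abs_nonneg _)) hΨmax
    _ ≤ max C0 0 ^ n * Ψ t * volume.real Q := by gcongr
    _ = 2 / η * max C0 0 ^ n * (Ψ t * (η / 2 * volume.real Q)) := by field_simp
    _ ≤ 2 / η * max C0 0 ^ n * (Ψ t * volume.real G) := by gcongr; exact hΨ0 t ht
    _ ≤ 2 / η * max C0 0 ^ n * ∫ x in F, Ψ |P x| := by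
        gcongr
        exact mul_measureReal_le_setIntegral (hint.mono_set hFQ) (fun _ => hΨ0 _ (abs_nonneg _))
          hGm (fun x hx => hx.1) hGfin fun x hx => hmono ht (abs_nonneg (P x)) hx.2
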